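/- Let b > 0 and T ≥ 0. There exists a constant C > 0, depending only on b and T, such that for every natural number ℓ ≥ 1 the following holds: if X_1, …, X_{ℓ+1} are independent real random variables on a probability space with X_k exponentially distributed with rate k·b, then ℙ( Σ_{k=1}^{ℓ+1} X_k ≤ T ) ≤ C · ℓ^{−4}. -/

import Mathlib

/-!
Chernoff's bound at `t = -4b` gives `ℙ(S ≤ T) ≤ e^{4bT} 𝔼[e^{-4bS}]` for `S = ∑ X_k`. Since the
moment generating function of `Exp(r)` at `t < r` is `r / (r - t)`, independence turns
`𝔼[e^{-4bS}]` into `∏_{k=1}^{ℓ+1} k / (k + 4) = 24 / ((ℓ+2)(ℓ+3)(ℓ+4)(ℓ+5)) ≤ 24 ℓ⁻⁴`.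
-/

open MeasureTheory ProbabilityTheory Real

section ExponentialMGF

variable {r t : ℝ}

lemma ofReal_exp_mul_mul_exponentialPDF (ht : t < r) (x : ℝ) :
    ENNReal.ofReal (exp (t * x)) * exponentialPDF r x
      = ENNReal.ofReal (r / (r - t)) * exponentialPDF (r - t) x := by
  rcases lt_or_ge x 0 with hx | hx
  · simp only [exponentialPDF_of_neg hx, mul_zero]
  have hrt : 0 < r - t := sub_pos.mpr ht
  rw [exponentialPDF_of_nonneg hx, exponentialPDF_of_nonneg hx,
    ← ENNReal.ofReal_mul (exp_pos _).le, ← ENNReal.ofReal_mul' (by positivity)]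
  congr 1
  field_simp
  rw [mul_right_comm, ← exp_add]
  ring_nf

lemma lintegral_exp_mul_exponential (ht : t < r) :
    ∫⁻ x, ENNReal.ofReal (exp (t * x)) ∂volume.withDensity (exponentialPDF r)
      = ENNReal.ofReal (r / (r - t)) := by
  have hpdf : ∀ s, Measurable (exponentialPDF s) :=
    fun s => (measurable_exponentialPDFReal s).ennreal_ofReal
  rw [lintegral_withDensity_eq_lintegral_mul _ (hpdf r) (by fun_prop)]
  simp_rw [Pi.mul_apply, mul_comm (exponentialPDF r _), ofReal_exp_mul_mul_exponentialPDF ht]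
  rw [lintegral_const_mul _ (hpdf _), lintegral_exponentialPDF_eq_one (sub_pos.mpr ht), mul_one]

lemma integrable_exp_mul_exponential (ht : t < r) :
    Integrable (fun x => exp (t * x)) (volume.withDensity (exponentialPDF r)) := by
  refine ⟨by fun_prop, ?_⟩
  rw [hasFiniteIntegral_iff_ofReal (ae_of_all _ fun x => (exp_pos _).le),
    lintegral_exp_mul_exponential ht]
  exact ENNReal.ofReal_lt_top

lemma mgf_id_exponential (hr : 0 ≤ r) (ht : t < r) :
    mgf id (volume.withDensity (exponentialPDF r)) t = r / (r - t) := by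
  have hrt : 0 < r - t := sub_pos.mpr ht
  rw [mgf, integral_eq_lintegral_of_nonneg_ae (ae_of_all _ fun x => (exp_pos _).le)
      (by fun_prop)]
  simp only [id]
  rw [lintegral_exp_mul_exponential ht, ENNReal.toReal_ofReal (by positivity)]

variable {Ω : Type*} [MeasurableSpace Ω] {P : Measure Ω} {X : Ω → ℝ}

lemma integrable_exp_mul_of_map_eq_exponential (hX : Measurable X)
    (hmap : P.map X = volume.withDensity (exponentialPDF r)) (ht : t < r) :
    Integrable (fun ω => exp (t * X ω)) P := by
  have hint := integrable_exp_mul_exponential ht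
  rw [← hmap] at hint
  exact (integrable_map_measure (by fun_prop) hX.aemeasurable).mp hint

lemma mgf_of_map_eq_exponential (hX : Measurable X)
    (hmap : P.map X = volume.withDensity (exponentialPDF r)) (hr : 0 ≤ r) (ht : t < r) :
    mgf X P t = r / (r - t) := by
  rw [← mgf_id_map hX.aemeasurable, hmap, mgf_id_exponential hr ht]

end ExponentialMGF

theorem measureReal_sum_le_le_of_exponential {ι Ω : Type*} [Fintype ι] [MeasurableSpace Ω]
    {P : Measure Ω} {X : ι → Ω → ℝ} {r : ι → ℝ} (hr : ∀ i, 0 < r i)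
    (hX : ∀ i, Measurable (X i)) (hindep : iIndepFun X P)
    (hmap : ∀ i, P.map (X i) = volume.withDensity (exponentialPDF (r i)))
    {c : ℝ} (hc : 0 ≤ c) (T : ℝ) :
    P.real {ω | ∑ i, X i ω ≤ T} ≤ exp (c * T) * ∏ i, r i / (r i + c) := by
  have := hindep.isProbabilityMeasure
  have hlt : ∀ i, -c < r i := fun i => by linarith [hr i]
  have hsum : (fun ω => ∑ i, X i ω) = ∑ i, X i := by ext ω; simp
  have hint : Integrable (fun ω => exp (-c * ∑ i, X i ω)) P := by
    simpa [hsum] using hindep.integrable_exp_mul_sum hX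
      fun i _ => integrable_exp_mul_of_map_eq_exponential (hX i) (hmap i) (hlt i)
  have hmgf : mgf (fun ω => ∑ i, X i ω) P (-c) = ∏ i, r i / (r i + c) := by
    rw [hsum, hindep.mgf_sum hX]
    refine Finset.prod_congr rfl fun i _ => ?_
    rw [mgf_of_map_eq_exponential (hX i) (hmap i) (hr i).le (hlt i), sub_neg_eq_add]
  simpa [hmgf] using measure_le_le_exp_mul_mgf T (neg_nonpos.mpr hc) hint

lemma prod_range_add_one_div_add_five (n : ℕ) :
    ∏ k ∈ Finset.range n, ((k : ℝ) + 1) / ((k : ℝ) + 5)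
      = 24 / (((n : ℝ) + 1) * ((n : ℝ) + 2) * ((n : ℝ) + 3) * ((n : ℝ) + 4)) := by
  induction n with
  | zero => norm_num
  | succ n ih =>
    rw [Finset.prod_range_succ, ih]
    push_cast
    field_simp
    ring

theorem stmt_8_general (b T : ℝ) (hb : 0 < b) :
    ∃ C : ℝ, 0 < C ∧
      ∀ (ℓ : ℕ), 1 ≤ ℓ →
      ∀ (Ω : Type) (_ : MeasureSpace Ω) (_ : IsProbabilityMeasure (ℙ : Measure Ω))
        (X : Fin (ℓ + 1) → Ω → ℝ),
        (∀ k, Measurable (X k)) →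
        iIndepFun X ℙ →
        (∀ k : Fin (ℓ + 1),
          Measure.map (X k) ℙ = volume.withDensity (exponentialPDF (((k : ℕ) + 1) * b))) →
        ℙ {ω | ∑ k : Fin (ℓ + 1), X k ω ≤ T} ≤ ENNReal.ofReal (C / (ℓ : ℝ) ^ 4) := by
  refine ⟨24 * exp (4 * b * T), by positivity, fun ℓ hℓ Ω _ _ X hX hindep hmap => ?_⟩
  have hchernoff := measureReal_sum_le_le_of_exponential (fun k => by positivity) hX hindep hmap
    (by positivity : 0 ≤ 4 * b) T
  have hprod : ∏ k : Fin (ℓ + 1), ((k : ℕ) + 1) * b / (((k : ℕ) + 1) * b + 4 * b)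
      = 24 / (((ℓ : ℝ) + 2) * ((ℓ : ℝ) + 3) * ((ℓ : ℝ) + 4) * ((ℓ : ℝ) + 5)) := by
    simp_rw [← add_mul, mul_div_mul_right _ _ hb.ne', add_assoc, show (1 : ℝ) + 4 = 5 by norm_num]
    rw [Fin.prod_univ_eq_prod_range (fun k => ((k : ℝ) + 1) / ((k : ℝ) + 5)),
      prod_range_add_one_div_add_five]
    push_cast
    ring_nf
  have hℓ_pos : (0 : ℝ) < ℓ := by exact_mod_cast hℓ
  have hpoly : (ℓ : ℝ) ^ 4 ≤ ((ℓ : ℝ) + 2) * ((ℓ : ℝ) + 3) * ((ℓ : ℝ) + 4) * ((ℓ : ℝ) + 5) := by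
    rw [pow_succ, pow_three, ← mul_assoc]
    gcongr <;> linarith
  rw [← ofReal_measureReal]
  refine ENNReal.ofReal_le_ofReal (hchernoff.trans ?_)
  rw [hprod, mul_div_assoc', mul_comm]
  gcongr

/-- The estimate `P(E⁺_{2ℓ+1}) ≤ C ℓ⁻⁴` from the proof of Proposition 2.3: for `b > 0` and
`T ≥ 0` there is a constant `C > 0` (depending only on `b` and `T`) such that whenever
`X_1, …, X_{ℓ+1}` are independent with `X_k` exponentially distributed with rate `k·b`
(here `X k` for `k : Fin (ℓ+1)` plays the role of `X_{k+1}`, with rate `(k+1)·b`),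
one has `ℙ(∑_{k=1}^{ℓ+1} X_k ≤ T) ≤ C ℓ⁻⁴`. -/
theorem stmt_8 (b T : ℝ) (hb : 0 < b) (hT : 0 ≤ T) :
    ∃ C : ℝ, 0 < C ∧
      ∀ (ℓ : ℕ), 1 ≤ ℓ →
      ∀ (Ω : Type) (_ : MeasureSpace Ω) (_ : IsProbabilityMeasure (ℙ : Measure Ω))
        (X : Fin (ℓ + 1) → Ω → ℝ),
        (∀ k, Measurable (X k)) →
        iIndepFun X ℙ →
        (∀ k : Fin (ℓ + 1),
          Measure.map (X k) ℙ = volume.withDensity (exponentialPDF (((k : ℕ) + 1) * b))) →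
        ℙ {ω | ∑ k : Fin (ℓ + 1), X k ω ≤ T} ≤ ENNReal.ofReal (C / (ℓ : ℝ) ^ 4) :=
  stmt_8_general b T hb
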